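/- Double difference bound: for every r with 0 < r < 1/2 there exists a constant C > 0 such that for all real numbers a, b, c, d ≥ 0 with a − b + c − d = 0, one has |⟨a⟩^{2r} − ⟨b⟩^{2r} + ⟨c⟩^{2r} − ⟨d⟩^{2r}| ≤ C · |a − b| · |b − c| · ⟨min{a, b, c, d}⟩^{2r − 2}. -/

import Mathlib

/-! With `f x = (1 + x²)^r = ⟨x⟩^{2r}` and `d = a - b + c`, the double difference is
`g b - g a` for `g s = f (s + (c - b)) - f s`; two applications of the mean value theorem turn it
into `f'' η (c - b) (b - a)` with `η ≥ min {a, b, c, d}`. Since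
`f'' x = 2r (1 + (2r - 1) x²) (1 + x²)^{r-2}` and `|2r - 1| ≤ 1`, one has
`|f'' x| ≤ 2r ⟨x⟩^{2r-2}`, which is antitone on `[0, ∞)`; so `C = 2r` works. -/

/-- The Japanese bracket `⟨x⟩ = √(1 + x²)`. -/
noncomputable def jbr (x : ℝ) : ℝ := Real.sqrt (1 + x^2)

open Real Set

lemma jbr_rpow_two_mul (x s : ℝ) : jbr x ^ (2 * s) = (1 + x ^ 2) ^ s := by
  rw [jbr, sqrt_eq_rpow, ← rpow_mul (by positivity)]
  ring_nf

section MeanValue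

variable {f f' f'' : ℝ → ℝ}

lemma exists_mem_uIcc_sub_eq_mul_sub (hf : ∀ x, HasDerivAt f (f' x) x) (p q : ℝ) :
    ∃ ξ ∈ uIcc p q, f q - f p = f' ξ * (q - p) := by
  have hcont : Continuous f := continuous_iff_continuousAt.2 fun x => (hf x).continuousAt
  rcases lt_trichotomy p q with hpq | rfl | hqp
  · obtain ⟨ξ, hξ, h⟩ := exists_hasDerivAt_eq_slope f f' hpq hcont.continuousOn
      fun x _ => hf x
    refine ⟨ξ, Ioo_subset_Icc_self.trans Icc_subset_uIcc hξ, ?_⟩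
    rw [h, div_mul_cancel₀ _ (sub_ne_zero.2 hpq.ne')]
  · exact ⟨p, left_mem_uIcc, by ring⟩
  · obtain ⟨ξ, hξ, h⟩ := exists_hasDerivAt_eq_slope f f' hqp hcont.continuousOn
      fun x _ => hf x
    refine ⟨ξ, Ioo_subset_Icc_self.trans Icc_subset_uIcc' hξ, ?_⟩
    rw [h, div_mul_eq_mul_div, eq_div_iff (sub_ne_zero.2 hqp.ne')]
    ring

lemma exists_min_le_double_sub_eq (hf : ∀ x, HasDerivAt f (f' x) x)
    (hf' : ∀ x, HasDerivAt f' (f'' x) x) {a b c d : ℝ} (habcd : a - b + c - d = 0) :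
    ∃ η, min (min a b) (min c d) ≤ η ∧
      f a - f b + f c - f d = f'' η * (c - b) * (b - a) := by
  have hg : ∀ s, HasDerivAt (fun s => f (s + (c - b)) - f s)
      (f' (s + (c - b)) - f' s) s := fun s =>
    ((hf _).comp_add_const s (c - b)).sub (hf s)
  obtain ⟨ξ, hξ, hξeq⟩ := exists_mem_uIcc_sub_eq_mul_sub hg a b
  obtain ⟨η, hη, hηeq⟩ := exists_mem_uIcc_sub_eq_mul_sub hf' ξ (ξ + (c - b))
  have hd : d = a + (c - b) := by linarith
  have hξ_lower : min a b ≤ ξ := hξ.1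
  have hη_lower : min ξ (ξ + (c - b)) ≤ η := hη.1
  have hshift_lower : min c d ≤ ξ + (c - b) := by
    rcases min_le_iff.1 hξ_lower with h | h
    · exact (min_le_right _ _).trans (by linarith)
    · exact (min_le_left _ _).trans (by linarith)
  refine ⟨η, le_trans (le_min ((min_le_left _ _).trans hξ_lower)
    ((min_le_right _ _).trans hshift_lower)) hη_lower, ?_⟩
  simp only [hd, add_sub_cancel, add_sub_cancel_left] at hξeq hηeq ⊢
  linear_combination hξeq + (b - a) * hηeq

end MeanValue

lemma one_add_sq_rpow_sub_one (r x : ℝ) :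
    (1 + x ^ 2) ^ (r - 1) = (1 + x ^ 2) * (1 + x ^ 2) ^ (r - 2) := by
  rw [mul_comm, ← rpow_add_one (by positivity)]
  ring_nf

lemma hasDerivAt_one_add_sq_rpow (r x : ℝ) :
    HasDerivAt (fun y => (1 + y ^ 2) ^ r) (2 * r * x * (1 + x ^ 2) ^ (r - 1)) x := by
  have h := ((hasDerivAt_pow 2 x).const_add 1).rpow_const (p := r) (Or.inl (by positivity))
  convert h using 1
  push_cast
  ring

lemma hasDerivAt_mul_one_add_sq_rpow_sub_one (r x : ℝ) :
    HasDerivAt (fun y => 2 * r * y * (1 + y ^ 2) ^ (r - 1))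
      (2 * r * (1 + (2 * r - 1) * x ^ 2) * (1 + x ^ 2) ^ (r - 2)) x := by
  have hpow := ((hasDerivAt_pow 2 x).const_add 1).rpow_const (p := r - 1) (Or.inl (by positivity))
  refine (((hasDerivAt_id x).const_mul (2 * r)).mul hpow).congr_deriv ?_
  rw [one_add_sq_rpow_sub_one, show r - 1 - 1 = r - 2 by ring, id]
  norm_num
  ring

lemma abs_second_deriv_one_add_sq_rpow_le {r : ℝ} (hr0 : 0 ≤ r) (hr1 : r ≤ 1) (x : ℝ) :
    |2 * r * (1 + (2 * r - 1) * x ^ 2) * (1 + x ^ 2) ^ (r - 2)| ≤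
      2 * r * (1 + x ^ 2) ^ (r - 1) := by
  have hx : 0 < 1 + x ^ 2 := by positivity
  have hfactor : |1 + (2 * r - 1) * x ^ 2| ≤ 1 + x ^ 2 := by
    rw [abs_le]
    constructor <;> nlinarith [sq_nonneg x]
  rw [one_add_sq_rpow_sub_one, abs_mul, abs_mul, abs_of_nonneg (by positivity : (0 : ℝ) ≤ 2 * r),
    abs_of_pos (rpow_pos_of_pos hx _), ← mul_assoc]
  gcongr

lemma one_add_sq_rpow_le_of_le {r : ℝ} (hr1 : r ≤ 1) {x y : ℝ} (hx : 0 ≤ x) (hxy : x ≤ y) :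
    (1 + y ^ 2) ^ (r - 1) ≤ (1 + x ^ 2) ^ (r - 1) :=
  rpow_le_rpow_of_nonpos (by positivity) (by gcongr) (by linarith)

/-- double difference bound: for `0 < r < 1/2` there is `C > 0` such that
for all nonnegative reals with `a - b + c - d = 0`,
`|⟨a⟩^{2r} - ⟨b⟩^{2r} + ⟨c⟩^{2r} - ⟨d⟩^{2r}| ≤ C |a-b| |b-c| ⟨min{a,b,c,d}⟩^{2r-2}`. -/
theorem stmt11 (r : ℝ) (hr0 : 0 < r) (hr : r < 1/2) :
    ∃ C : ℝ, 0 < C ∧ ∀ a b c d : ℝ, 0 ≤ a → 0 ≤ b → 0 ≤ c → 0 ≤ d →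
      a - b + c - d = 0 →
      |jbr a ^ (2*r) - jbr b ^ (2*r) + jbr c ^ (2*r) - jbr d ^ (2*r)|
        ≤ C * |a - b| * |b - c| * jbr (min (min a b) (min c d)) ^ (2*r - 2) := by
  refine ⟨2 * r, by positivity, fun a b c d ha hb hc hd habcd => ?_⟩
  obtain ⟨η, hmη, heq⟩ := exists_min_le_double_sub_eq (hasDerivAt_one_add_sq_rpow r)
    (hasDerivAt_mul_one_add_sq_rpow_sub_one r) habcd
  set m := min (min a b) (min c d)
  have hm : 0 ≤ m := le_min (le_min ha hb) (le_min hc hd)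
  rw [show 2 * r - 2 = 2 * (r - 1) by ring]
  simp only [jbr_rpow_two_mul] at heq ⊢
  calc _ = |2 * r * (1 + (2 * r - 1) * η ^ 2) * (1 + η ^ 2) ^ (r - 2)| * |a - b| * |b - c| := by
        rw [heq, abs_mul, abs_mul, abs_sub_comm c b, abs_sub_comm b a, mul_right_comm]
    _ ≤ 2 * r * (1 + η ^ 2) ^ (r - 1) * |a - b| * |b - c| := by
        gcongr
        exact abs_second_deriv_one_add_sq_rpow_le hr0.le (by linarith) η
    _ ≤ 2 * r * (1 + m ^ 2) ^ (r - 1) * |a - b| * |b - c| := by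
        gcongr 2 * r * ?_ * _ * _
        exact one_add_sq_rpow_le_of_le (r := r) (by linarith) hm hmη
    _ = _ := by ring
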